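/- arXiv:1609.07649 — 2 statements merged into one kernel-verified Lean document; each statement's English description precedes it below -/
import Mathlib

section
/- Let n > 1 and let A be an n-dimensional evolution algebra over a field K whose annihilator has dimension n − 1. Then A is isomorphic to the evolution algebra E_1 with natural basis {e_1,…,e_n} and products e_1e_1 = e_1 and e_ie_j = 0 otherwise, or to the evolution algebra E_4 with natural basis {e_1,…,e_n} and products e_1e_1 = e_2 and e_ie_j = 0 otherwise. -/
/-!
A vector `u` annihilates the algebra iff `u i = 0` for every nonzero row `t i`, so the
annihilator has codimension equal to the number of nonzero rows. Codimension one therefore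
means `t = Pi.single i₀ w` with `w ≠ 0`, i.e. `u * v = (u i₀ * v i₀) • w`. Such an algebra
is classified by whether `w i₀ = 0`: a permutation of coordinates followed by a
dilatransvection `x ↦ x + x j • (v - e_j)` is a change of natural basis carrying it to `E₁`
(if `w i₀ ≠ 0`, after rescaling so that the image of `e_{i₀}` is idempotent) or to `E₄`
(if `w i₀ = 0`, using a coordinate `j₀` with `w j₀ ≠ 0`).
-/

open scoped BigOperators

noncomputable section

/-- The product in the `n`-dimensional evolution algebra over `K` (on the model space
`Fin n → K`, whose standard basis is the natural basis) with structure constants `t`,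
so that `eᵢ * eᵢ = ∑ⱼ t i j • eⱼ` and `eᵢ * eⱼ = 0` for `i ≠ j`. -/
def evolMul {K : Type*} [Field K] {n : ℕ} (t : Fin n → Fin n → K)
    (x y : Fin n → K) : Fin n → K :=
  fun k => ∑ i, x i * y i * t i k

lemma evolMul_add_left {K : Type*} [Field K] {n : ℕ} (t : Fin n → Fin n → K)
    (a b v : Fin n → K) : evolMul t (a + b) v = evolMul t a v + evolMul t b v := by
  funext k
  simp [evolMul, add_mul, Finset.sum_add_distrib]

lemma evolMul_add_right {K : Type*} [Field K] {n : ℕ} (t : Fin n → Fin n → K)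
    (v a b : Fin n → K) : evolMul t v (a + b) = evolMul t v a + evolMul t v b := by
  funext k
  simp [evolMul, mul_add, add_mul, Finset.sum_add_distrib]

lemma evolMul_smul_left {K : Type*} [Field K] {n : ℕ} (t : Fin n → Fin n → K)
    (c : K) (a v : Fin n → K) : evolMul t (c • a) v = c • evolMul t a v := by
  funext k
  simp [evolMul, Finset.mul_sum, mul_assoc]

lemma evolMul_smul_right {K : Type*} [Field K] {n : ℕ} (t : Fin n → Fin n → K)
    (c : K) (v a : Fin n → K) : evolMul t v (c • a) = c • evolMul t v a := by
  funext k
  simp [evolMul, Finset.mul_sum]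
  ring_nf
  apply Finset.sum_congr rfl
  intro i _
  ring

/-- The annihilator of the evolution algebra with structure constants `t`. -/
def evolAnn {K : Type*} [Field K] {n : ℕ} (t : Fin n → Fin n → K) :
    Submodule K (Fin n → K) where
  carrier := {u | ∀ v, evolMul t u v = 0 ∧ evolMul t v u = 0}
  zero_mem' := by
    intro v
    constructor <;> · funext k; simp [evolMul]
  add_mem' := by
    intro a b ha hb v
    exact ⟨by rw [evolMul_add_left, (ha v).1, (hb v).1, add_zero],
           by rw [evolMul_add_right, (ha v).2, (hb v).2, add_zero]⟩
  smul_mem' := by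
    intro c a ha v
    exact ⟨by rw [evolMul_smul_left, (ha v).1, smul_zero],
           by rw [evolMul_smul_right, (ha v).2, smul_zero]⟩

/-- The derived algebra (span of all products). -/
def evolDerived {K : Type*} [Field K] {n : ℕ} (t : Fin n → Fin n → K) :
    Submodule K (Fin n → K) :=
  Submodule.span K {w | ∃ u v, evolMul t u v = w}

/-- Two evolution algebras (given by structure constants) are isomorphic. -/
def EvolIsom {K : Type*} [Field K] {n : ℕ} (t t' : Fin n → Fin n → K) : Prop :=
  ∃ f : (Fin n → K) ≃ₗ[K] (Fin n → K),
    ∀ u v, evolMul t' (f u) (f v) = f (evolMul t u v)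

/-- Two evolution algebras (given by structure constants) are isotopic. -/
def EvolIsotopic {K : Type*} [Field K] {n : ℕ} (t t' : Fin n → Fin n → K) : Prop :=
  ∃ f g h : (Fin n → K) ≃ₗ[K] (Fin n → K),
    ∀ u v, evolMul t' (f u) (g v) = h (evolMul t u v)

/-- Two evolution algebras (given by structure constants) are strongly isotopic. -/
def EvolStrongIsotopic {K : Type*} [Field K] {n : ℕ} (t t' : Fin n → Fin n → K) : Prop :=
  ∃ f h : (Fin n → K) ≃ₗ[K] (Fin n → K),
    ∀ u v, evolMul t' (f u) (f v) = h (evolMul t u v)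

section

open Module LinearMap

variable {K : Type*} [Field K] {n : ℕ}

lemma evolMul_eq_sum (t : Fin n → Fin n → K) (u v : Fin n → K) :
    evolMul t u v = ∑ i, (u i * v i) • t i := by
  funext k
  simp [evolMul]

lemma evolMul_comm (t : Fin n → Fin n → K) (u v : Fin n → K) :
    evolMul t u v = evolMul t v u := by
  simp only [evolMul_eq_sum, mul_comm]

lemma evolMul_single_one_right (t : Fin n → Fin n → K) (u : Fin n → K) (i : Fin n) :
    evolMul t u (Pi.single i 1) = u i • t i := by
  rw [evolMul_eq_sum, Finset.sum_eq_single i] <;> simp +contextual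

lemma evolMul_single (i : Fin n) (w u v : Fin n → K) :
    evolMul (Pi.single i w) u v = (u i * v i) • w := by
  rw [evolMul_eq_sum, Finset.sum_eq_single i] <;> simp +contextual

lemma mem_evolAnn_iff {t : Fin n → Fin n → K} {u : Fin n → K} :
    u ∈ evolAnn t ↔ ∀ i, t i ≠ 0 → u i = 0 := by
  refine ⟨fun hu i hti => ?_, fun hu v => ?_⟩
  · have h := (hu (Pi.single i 1)).1
    rw [evolMul_single_one_right, smul_eq_zero] at h
    exact h.resolve_right hti
  · have h : evolMul t u v = 0 := by
      rw [evolMul_eq_sum]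
      refine Finset.sum_eq_zero fun i _ => ?_
      by_cases hti : t i = 0 <;> simp [hti, hu i]
    exact ⟨h, by rwa [evolMul_comm]⟩

lemma evolAnn_eq_ker_funLeft (t : Fin n → Fin n → K) :
    evolAnn t = ker (funLeft K K (Subtype.val : {i // t i ≠ 0} → Fin n)) := by
  ext u
  simp [mem_evolAnn_iff, funext_iff, funLeft]

lemma finrank_evolAnn_add_card (t : Fin n → Fin n → K) :
    finrank K (evolAnn t) + Nat.card {i // t i ≠ 0} = n := by
  classical
  have h := (funLeft K K (Subtype.val : {i // t i ≠ 0} → Fin n)).finrank_range_add_finrank_ker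
  rw [range_eq_top.2 (funLeft_surjective_of_injective _ _ _ Subtype.val_injective),
    finrank_top, ← evolAnn_eq_ker_funLeft, finrank_fin_fun, finrank_pi,
    ← Nat.card_eq_fintype_card] at h
  omega

lemma exists_eq_single_of_finrank_evolAnn {t : Fin n → Fin n → K} (hn : 0 < n)
    (h : finrank K (evolAnn t) = n - 1) : ∃ i w, w ≠ 0 ∧ t = Pi.single i w := by
  have hcard : Nat.card {i // t i ≠ 0} = 1 := by
    have := finrank_evolAnn_add_card t
    omega
  obtain ⟨⟨i, hi⟩, huniq⟩ := Nat.card_eq_one_iff_exists.1 hcard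
  refine ⟨i, t i, hi, funext fun j => ?_⟩
  by_cases hj : j = i
  · simp [hj]
  · rw [Pi.single_eq_of_ne hj]
    by_contra htj
    exact hj (congrArg Subtype.val (huniq ⟨j, htj⟩))

theorem EvolIsom.symm {t t' : Fin n → Fin n → K} (h : EvolIsom t t') : EvolIsom t' t := by
  obtain ⟨f, hf⟩ := h
  exact ⟨f.symm, fun x y => f.injective (by simp [← hf])⟩

lemma evolIsom_single_of_linearEquiv {i i' : Fin n} {w w' : Fin n → K}
    (f : (Fin n → K) ≃ₗ[K] (Fin n → K)) (c : K) (hf : ∀ u, f u i' = c * u i)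
    (hw : f w = c ^ 2 • w') : EvolIsom (Pi.single i w) (Pi.single i' w') :=
  ⟨f, fun u v => by
    rw [evolMul_single, evolMul_single, hf, hf, map_smul, hw, smul_smul]
    ring_nf⟩

lemma ite_val_eq_single {k : ℕ} (h0 : 0 < n) (hk : k < n) :
    (fun i j : Fin n => if (i : ℕ) = 0 ∧ (j : ℕ) = k then (1 : K) else 0) =
      Pi.single ⟨0, h0⟩ (Pi.single ⟨k, hk⟩ 1) := by
  funext i j
  by_cases hi : (i : ℕ) = 0 <;> by_cases hj : (j : ℕ) = k <;>
    simp [hi, hj, Pi.single_apply, Fin.ext_iff]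

lemma funLeft_single {ι : Type*} [DecidableEq ι] (σ : Equiv.Perm ι) (i : ι) (c : K) :
    funLeft K K σ (Pi.single (σ i) c) = Pi.single i c := by
  ext j
  simp [funLeft, Pi.single_apply]

lemma evolIsom_single_of_apply_ne_zero {i₀ : Fin n} {w : Fin n → K} (hw : w i₀ ≠ 0)
    (z : Fin n) :
    EvolIsom (Pi.single i₀ w) (Pi.single z (Pi.single z 1)) := by
  obtain ⟨σ, rfl⟩ := MulAction.exists_smul_eq (Equiv.Perm (Fin n)) i₀ z
  have ha : IsUnit (1 + proj (R := K) i₀ ((w i₀)⁻¹ ^ 2 • w - Pi.single i₀ 1)) := by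
    simp [hw]
  refine (evolIsom_single_of_linearEquiv
    ((LinearEquiv.funCongrLeft K K σ).trans (LinearEquiv.dilatransvection ha)) (w i₀)⁻¹
    (fun x => ?_) ?_).symm
  · simp only [LinearEquiv.trans_apply, LinearEquiv.funCongrLeft_apply, funLeft_apply,
      LinearEquiv.dilatransvection.apply, coe_proj, Function.eval, Pi.add_apply, Pi.smul_apply,
      Pi.sub_apply, smul_eq_mul, Pi.single_eq_same, Equiv.Perm.smul_def]
    field_simp
    ring
  · simp [LinearEquiv.dilatransvection.apply, funLeft_single]

lemma evolIsom_single_of_apply_eq_zero {i₀ j₀ : Fin n} {w : Fin n → K} (hi₀ : w i₀ = 0)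
    (hj₀ : w j₀ ≠ 0) {z₀ z₁ : Fin n} (hz : z₀ ≠ z₁) :
    EvolIsom (Pi.single i₀ w) (Pi.single z₀ (Pi.single z₁ 1)) := by
  have hij : i₀ ≠ j₀ := fun h => hj₀ (h ▸ hi₀)
  obtain ⟨σ, rfl, rfl⟩ := MulAction.is_two_pretransitive_iff.1
    (Equiv.Perm.isMultiplyPretransitive (Fin n) 2) hij hz
  have hw : IsUnit (1 + proj (R := K) j₀ (w - Pi.single j₀ 1)) := by simp [hj₀]
  refine (evolIsom_single_of_linearEquiv
    ((LinearEquiv.funCongrLeft K K σ).trans (LinearEquiv.dilatransvection hw)) 1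
    (fun x => ?_) ?_).symm
  · simp [LinearEquiv.dilatransvection.apply, hi₀, hij]
  · simp [LinearEquiv.dilatransvection.apply, funLeft_single]

end

theorem isom_E1_or_E4_of_annihilator_codim_one
    {K : Type*} [Field K] {n : ℕ} (hn : 1 < n) (t : Fin n → Fin n → K)
    (hann : Module.finrank K (evolAnn t) = n - 1) :
    EvolIsom t (fun i j : Fin n => if (i : ℕ) = 0 ∧ (j : ℕ) = 0 then (1 : K) else 0) ∨
    EvolIsom t (fun i j : Fin n => if (i : ℕ) = 0 ∧ (j : ℕ) = 1 then (1 : K) else 0) := by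
  obtain ⟨i₀, w, hw, rfl⟩ := exists_eq_single_of_finrank_evolAnn (by omega) hann
  rw [ite_val_eq_single (by omega) (by omega), ite_val_eq_single (by omega) hn]
  by_cases hi₀ : w i₀ = 0
  · obtain ⟨j₀, hj₀⟩ := Function.ne_iff.1 hw
    exact Or.inr (evolIsom_single_of_apply_eq_zero hi₀ hj₀ (by simp [Fin.ext_iff]))
  · exact Or.inl (evolIsom_single_of_apply_ne_zero hi₀ _)
end
end

section
/- For every field K and all c, d, m ∈ K \ {0}, the two-dimensional evolution algebras A_{(e_2, c e_1 + d e_2)} and A_{(e_2, (c/m³) e_1 + (d/m²) e_2)} over K are isomorphic. -/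
open scoped BigOperators

noncomputable section

/-- Structure constants of the two-dimensional evolution algebra
`A_{(a e₁ + b e₂, c e₁ + d e₂)}`, i.e. with natural basis `{e₁, e₂}` and products
`e₁e₁ = a e₁ + b e₂`, `e₂e₂ = c e₁ + d e₂`, `e₁e₂ = e₂e₁ = 0`. -/
def evA {K : Type*} [Field K] (a b c d : K) : Fin 2 → Fin 2 → K :=
  ![![a, b], ![c, d]]

theorem evolIsom_rescale {K : Type*} [Field K] {n : ℕ} (t : Fin n → Fin n → K)
    (s : Fin n → K) (hs : ∀ i, s i ≠ 0) :
    EvolIsom t (fun i j => t i j * s j / s i ^ 2) := by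
  refine ⟨LinearEquiv.piCongrRight fun i => LinearEquiv.smulOfNeZero K K (s i) (hs i), ?_⟩
  intro u v
  funext k
  change ∑ i, s i * u i * (s i * v i) * (t i k * s k / s i ^ 2) = s k * ∑ i, u i * v i * t i k
  rw [Finset.mul_sum]
  refine Finset.sum_congr rfl fun i _ => ?_
  field_simp [hs i]

theorem isom_case22_general {K : Type*} [Field K] (c d m : K)
    (hm : m ≠ 0) :
    EvolIsom (evA (0 : K) 1 c d) (evA (0 : K) 1 (c / m ^ 3) (d / m ^ 2)) := by
  have hs : ∀ i, ![m, m ^ 2] i ≠ 0 := by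
    intro i
    fin_cases i <;> simp [hm]
  convert evolIsom_rescale (evA 0 1 c d) ![m, m ^ 2] hs using 1
  ext i j
  fin_cases i <;> fin_cases j <;> simp [evA] <;> field_simp

theorem isom_case22 {K : Type*} [Field K] (c d m : K) (hc : c ≠ 0) (hd : d ≠ 0)
    (hm : m ≠ 0) :
    EvolIsom (evA (0 : K) 1 c d) (evA (0 : K) 1 (c / m ^ 3) (d / m ^ 2)) :=
  isom_case22_general c d m hm
end
end
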